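/- arXiv:2206.10086 — 2 statements merged into one kernel-verified Lean document; each statement's English description precedes it below -/
import Mathlib

section
/- Let P ∈ ℚ[T] be an irreducible polynomial with P(0) ≠ 0, and let Γ be the multiplicative subgroup of ℂˣ generated by the complex roots of P. If Γ is infinite cyclic (isomorphic to ℤ as an abstract group), then the degree of P is at most 2. -/
/-!
The roots of `P` lie in its splitting field `L`, and an embedding `L → ℂ` identifies the subgroup
of `Lˣ` they generate with `Γ`. Each `σ ∈ Gal(L/ℚ)` permutes the roots, hence acts on `Γ ≅ ℤ` by
an automorphism, i.e. by `±1`; since `P(0) ≠ 0` the roots lie in `Γ`, and they generate `L`, so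
`σ` is determined by this action. Thus `[L : ℚ] = |Gal(L/ℚ)| ≤ 2`, and `deg P = [ℚ(α) : ℚ] ≤ [L : ℚ]`
for any root `α`.
-/

open Polynomial Module

theorem MulAut.eq_one_or_eq_inv_int (ψ : MulAut (Multiplicative ℤ)) :
    ψ = 1 ∨ ψ = MulEquiv.inv _ := by
  have hψ (n) : ψ n = ψ (.ofAdd 1) ^ n.toAdd := MonoidHom.apply_mint _ ψ.toMonoidHom n
  obtain ⟨m, hm⟩ := ψ.surjective (.ofAdd 1)
  have hk : (ψ (.ofAdd 1)).toAdd * m.toAdd = 1 := by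
    rw [← Int.toAdd_zpow, ← hψ, hm, toAdd_ofAdd]
  rcases Int.eq_one_or_neg_one_of_mul_eq_one hk with h | h
  · left; ext n; simp [hψ n, h]
  · right; ext n; simp [hψ n, h]

section InfiniteCyclic

variable {G : Type*} [CommGroup G]

theorem MulAut.eq_one_or_eq_inv_of_mulEquiv_int (e : G ≃* Multiplicative ℤ) (φ : MulAut G) :
    φ = 1 ∨ φ = MulEquiv.inv G := by
  have hinv : MulAut.congr e (MulEquiv.inv G) = MulEquiv.inv _ := by ext; simp
  rcases MulAut.eq_one_or_eq_inv_int (MulAut.congr e φ) with h | h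
  · exact .inl ((MulAut.congr e).injective (h.trans (map_one _).symm))
  · exact .inr ((MulAut.congr e).injective (h.trans hinv.symm))

theorem card_le_two_of_injective_mulAut {H : Type*} (e : G ≃* Multiplicative ℤ)
    {ρ : H → MulAut G} (hρ : Function.Injective ρ) : Nat.card H ≤ 2 := by
  classical
  have hinj : Function.Injective fun h => decide (ρ h = 1) := by
    intro a b hab
    apply hρ
    rcases MulAut.eq_one_or_eq_inv_of_mulEquiv_int e (ρ a) with ha | ha <;>
      rcases MulAut.eq_one_or_eq_inv_of_mulEquiv_int e (ρ b) with hb | hb <;> simp_all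
  simpa using Nat.card_le_card_of_injective _ hinj

end InfiniteCyclic

namespace Polynomial

variable {F : Type*} [Field F]

def rootsSubgroup (p : F[X]) (E : Type*) [Field E] [Algebra F E] : Subgroup Eˣ :=
  Subgroup.closure {u : Eˣ | aeval (u : E) p = 0}

variable {E K : Type*} [Field E] [Field K] [Algebra F E] [Algebra F K]

theorem map_rootsSubgroup {p : F[X]} (hp : p ≠ 0) (hs : (p.map (algebraMap F E)).Splits)
    (φ : E →ₐ[F] K) : (rootsSubgroup p E).map (Units.map φ) = rootsSubgroup p K := by
  rw [rootsSubgroup, MonoidHom.map_closure]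
  congr 1
  ext v
  constructor
  · rintro ⟨u, hu, rfl⟩
    simp [aeval_algHom_apply, hu.out]
  · intro hv
    obtain ⟨x, hx, hxv⟩ : (v : K) ∈ φ '' p.rootSet E := by
      rw [hs.image_rootSet]
      exact mem_rootSet.mpr ⟨hp, hv⟩
    have hx0 : x ≠ 0 := by
      rintro rfl
      exact v.ne_zero (by simpa using hxv.symm)
    exact ⟨Units.mk0 x hx0, (mem_rootSet.mp hx).2, Units.ext hxv⟩

noncomputable def rootsSubgroupEquiv {p : F[X]} (hp : p ≠ 0)
    (hs : (p.map (algebraMap F E)).Splits) (φ : E →ₐ[F] K) :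
    rootsSubgroup p E ≃* rootsSubgroup p K :=
  (Subgroup.equivMapOfInjective _ _ (Units.map_injective φ.injective)).trans
    (MulEquiv.subgroupCongr (map_rootsSubgroup hp hs φ))

theorem injective_rootsSubgroupEquiv_gal {p : F[X]} (h0 : p.coeff 0 ≠ 0) :
    Function.Injective fun σ : p.Gal =>
      rootsSubgroupEquiv (fun hp => h0 (by simp [hp])) (SplittingField.splits p) σ.toAlgHom := by
  intro σ τ hστ
  refine Gal.ext p fun x hx => ?_
  have hx0 : x ≠ 0 := by
    rintro rfl
    simp [mem_rootSet, aeval_def, eval₂_at_zero, h0] at hx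
  have hu : Units.mk0 x hx0 ∈ rootsSubgroup p p.SplittingField :=
    Subgroup.subset_closure (mem_rootSet.mp hx).2
  exact congrArg (fun f => ((f ⟨_, hu⟩ : (p.SplittingField)ˣ) : p.SplittingField)) hστ

theorem _root_.Irreducible.natDegree_le_finrank_splittingField {p : F[X]} (hp : Irreducible p) :
    p.natDegree ≤ finrank F p.SplittingField := by
  obtain ⟨x, hx⟩ := (SplittingField.splits p).exists_eval_eq_zero
    (by rw [degree_map]; exact (degree_pos_of_irreducible hp).ne')
  rw [eval_map_algebraMap] at hx
  calc p.natDegree = (minpoly F x).natDegree := by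
        rw [← minpoly.eq_of_irreducible hp hx,
          natDegree_mul_C (inv_ne_zero (leadingCoeff_ne_zero.mpr hp.ne_zero))]
    _ ≤ finrank F p.SplittingField := minpoly.natDegree_le x

end Polynomial

/-- **Irreducible rational polynomials whose roots generate an infinite cyclic group have
degree at most 2.**

Let `P ∈ ℚ[T]` be irreducible with nonzero constant term, and let `Γ ≤ ℂˣ` be the
multiplicative subgroup generated by the complex roots of `P`.  If `Γ` is infinite cyclic
(isomorphic to `ℤ`), then `deg P ≤ 2`. -/
theorem natDegree_le_two_of_roots_generate_infinite_cyclic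
    (P : Polynomial ℚ) (hP : Irreducible P) (h0 : P.coeff 0 ≠ 0)
    (hcyc : Nonempty
      ((Subgroup.closure {u : ℂˣ | Polynomial.aeval (u : ℂ) P = 0}) ≃* Multiplicative ℤ)) :
    P.natDegree ≤ 2 := by
  obtain ⟨e⟩ := hcyc
  let ι : P.SplittingField →ₐ[ℚ] ℂ := SplittingField.lift P (IsAlgClosed.splits _)
  have eΓ : rootsSubgroup P P.SplittingField ≃* Multiplicative ℤ :=
    (rootsSubgroupEquiv hP.ne_zero (SplittingField.splits P) ι).trans e
  calc P.natDegree ≤ finrank ℚ P.SplittingField := hP.natDegree_le_finrank_splittingField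
    _ = Nat.card P.Gal := (Gal.card_of_separable hP.separable).symm
    _ ≤ 2 := card_le_two_of_injective_mulAut eΓ (injective_rootsSubgroupEquiv_gal h0)
end

section
/- Let K be a field, V a finite-dimensional K-vector space, and B a nondegenerate symmetric bilinear form on V. Let g : V → V be an isometry of (V, B), i.e. a linear automorphism with B(g v, g w) = B(v, w) for all v, w ∈ V. Suppose there are α₁, …, α_d ∈ Kˣ such that the 2d elements α₁, …, α_d, α₁⁻¹, …, α_d⁻¹ are pairwise distinct and V is the internal direct sum of the eigenspaces E(α₁), …, E(α_d), E(α₁⁻¹), …, E(α_d⁻¹) of g, where E(λ) := ker(g − λ·id). Then the centralizer of g in the orthogonal group O(V, B) := { h ∈ GL(V) : B(h v, h w) = B(v, w) for all v, w } is isomorphic, as a group, to the direct product ∏_{i=1}^{d} GL(E(αᵢ)). -/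
/-- The subgroup of the group of linear automorphisms of `V` consisting of the isometries
of the bilinear form `B` that commute with `g`, i.e. the centralizer of `g` in the
orthogonal group `O(V, B)`. -/
def orthogonalCentralizer {K V : Type*} [Field K] [AddCommGroup V] [Module K V]
    (B : V →ₗ[K] V →ₗ[K] K) (g : V ≃ₗ[K] V) : Subgroup (V ≃ₗ[K] V) where
  carrier := {h | (∀ v w : V, B (h v) (h w) = B v w) ∧ Commute h g}
  one_mem' := ⟨fun v w => rfl, Commute.one_left g⟩
  mul_mem' := by
    rintro a b ⟨ha, ha'⟩ ⟨hb, hb'⟩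
    refine ⟨fun v w => ?_, ha'.mul_left hb'⟩
    show B (a (b v)) (a (b w)) = B v w
    rw [ha, hb]
  inv_mem' := by
    rintro a ⟨ha, ha'⟩
    refine ⟨fun v w => ?_, ha'.inv_left⟩
    conv_rhs => rw [show v = a (a⁻¹ v) from (a.apply_symm_apply v).symm,
      show w = a (a⁻¹ w) from (a.apply_symm_apply w).symm]
    rw [ha]

/-!
Every `h` commuting with `g` preserves the eigenspaces `E(λ)` of `g`. Since
`B (g v) (g w) = λ μ B v w` for `v ∈ E(λ)`, `w ∈ E(μ)`, the summands `E(λ)` and `E(μ)` are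
`B`-orthogonal unless `λ μ = 1`; hence `B` pairs `E(αᵢ)` perfectly with `E(αᵢ⁻¹)` and
vanishes on every other pair of summands. An isometry commuting with `g` is therefore determined
by its restrictions `fᵢ` to the `E(αᵢ)`: on `E(αᵢ⁻¹)` it must be the inverse transpose of `fᵢ`
with respect to that pairing. Conversely, acting by `fᵢ` on `E(αᵢ)` and by its inverse transpose
on `E(αᵢ⁻¹)` defines an isometry commuting with `g`.
-/

open Module Module.End Function

namespace DirectSum.IsInternal

variable {R M ι : Type*} [DecidableEq ι]

section Semiring

variable [Semiring R] [AddCommMonoid M] [Module R M] {A : ι → Submodule R M}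

theorem linearMap_ext {N : Type*} [AddCommMonoid N] [Module R N] (hA : IsInternal A)
    {f f' : M →ₗ[R] N} (h : ∀ i (x : A i), f x = f' x) : f = f' :=
  LinearMap.ext_on (s := ⋃ i, (A i : Set M))
    (by rw [← Submodule.iSup_eq_span, hA.submodule_iSup_eq_top])
    (fun x hx => by obtain ⟨i, hi⟩ := Set.mem_iUnion.mp hx; exact h i ⟨x, hi⟩)

noncomputable def blockDiag (hA : IsInternal A) (F : ∀ i, A i ≃ₗ[R] A i) : M ≃ₗ[R] M :=
  let e := LinearEquiv.ofBijective (coeLinearMap A) hA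
  e.symm ≪≫ₗ congrLinearEquiv F ≪≫ₗ e

theorem blockDiag_apply (hA : IsInternal A) (F : ∀ i, A i ≃ₗ[R] A i) {i : ι} (x : A i) :
    hA.blockDiag F x = F i x := by
  have hx :
      (LinearEquiv.ofBijective (coeLinearMap A) hA).symm x = lof R ι (fun i => A i) i x := by
    rw [LinearEquiv.symm_apply_eq]; exact (coeLinearMap_of A i x).symm
  simp only [blockDiag, LinearEquiv.trans_apply, hx, coe_congrLinearEquiv, lmap_lof]
  exact coeLinearMap_of A i _

theorem eq_blockDiag (hA : IsInternal A) (F : ∀ i, A i ≃ₗ[R] A i) {T : M ≃ₗ[R] M}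
    (h : ∀ i (x : A i), T x = F i x) : T = hA.blockDiag F :=
  LinearEquiv.toLinearMap_injective <| hA.linearMap_ext fun i x => by
    simpa [blockDiag_apply] using h i x

end Semiring

section CommSemiring

variable [CommSemiring R] [AddCommMonoid M] [Module R M] {A : ι → Submodule R M}

theorem linearMap_ext₂ {N P κ : Type*} [AddCommMonoid N] [Module R N] [AddCommMonoid P]
    [Module R P] [DecidableEq κ] {A' : κ → Submodule R N} (hA : IsInternal A)
    (hA' : IsInternal A') {f f' : M →ₗ[R] N →ₗ[R] P}
    (h : ∀ i j (x : A i) (y : A' j), f x y = f' x y) : f = f' :=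
  hA.linearMap_ext fun i x => hA'.linearMap_ext fun j y => h i j x y

theorem commute_blockDiag (hA : IsInternal A) (F : ∀ i, A i ≃ₗ[R] A i) {T : M ≃ₗ[R] M}
    (c : ι → R) (hT : ∀ i, ∀ x ∈ A i, T x = c i • x) :
    Commute (hA.blockDiag F) T := by
  have hTx : ∀ i (x : A i), T x = ((c i • x : A i) : M) := fun i x => hT i x x.2
  refine LinearEquiv.toLinearMap_injective <| hA.linearMap_ext fun i x => ?_
  simp only [LinearEquiv.coe_toLinearMap_mul, Module.End.mul_apply, LinearEquiv.coe_coe]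
  rw [hTx, blockDiag_apply, blockDiag_apply, hTx, map_smul]

end CommSemiring

end DirectSum.IsInternal

namespace LinearMap

variable {R M N : Type*} [CommRing R] [AddCommGroup M] [Module R M] [AddCommGroup N] [Module R N]
  (p : M →ₗ[R] N →ₗ[R] R) [p.IsPerfPair]

noncomputable def contragredient (f : M ≃ₗ[R] M) : N ≃ₗ[R] N :=
  p.flip.toPerfPair ≪≫ₗ f.symm.dualMap ≪≫ₗ p.flip.toPerfPair.symm

theorem apply_contragredient (f : M ≃ₗ[R] M) (x : M) (y : N) :
    p (f x) (p.contragredient f y) = p x y := by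
  simp [contragredient]

theorem eq_contragredient {f : M ≃ₗ[R] M} {k : N ≃ₗ[R] N} (h : ∀ x y, p (f x) (k y) = p x y) :
    k = p.contragredient f := by
  ext y
  refine (IsPerfPair.bijective_right p).injective (LinearMap.ext fun x => ?_)
  obtain ⟨x, rfl⟩ := f.surjective x
  simp [h, apply_contragredient]

end LinearMap

section Eigenspace

variable {R M : Type*} [CommRing R] [AddCommGroup M] [Module R M]

theorem LinearEquiv.commute_coe_of_mem_centralizer {g h : M ≃ₗ[R] M}
    (hh : h ∈ Subgroup.centralizer {g}) : Commute (g : End R M) h :=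
  (congrArg LinearEquiv.toLinearMap (Subgroup.mem_centralizer_singleton_iff.mp hh)).symm

noncomputable def restrictEigenspace (g : M ≃ₗ[R] M) (μ : R) :
    Subgroup.centralizer {g} →*
      (eigenspace (g : End R M) μ ≃ₗ[R] eigenspace (g : End R M) μ) where
  toFun h := LinearEquiv.ofLinearMap
    ((h : End R M).restrict (mapsTo_genEigenspace_of_comm
      (LinearEquiv.commute_coe_of_mem_centralizer h.2) μ 1))
    (((h⁻¹ : M ≃ₗ[R] M) : End R M).restrict (mapsTo_genEigenspace_of_comm
      (LinearEquiv.commute_coe_of_mem_centralizer (h⁻¹).2) μ 1))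
    (LinearMap.ext fun x => Subtype.ext ((h : M ≃ₗ[R] M).apply_symm_apply x))
    (LinearMap.ext fun x => Subtype.ext ((h : M ≃ₗ[R] M).symm_apply_apply x))
  map_one' := rfl
  map_mul' _ _ := rfl

theorem apply_eq_zero_of_mem_eigenspace {B : M →ₗ[R] M →ₗ[R] R} {g : End R M}
    (hg : ∀ v w, B (g v) (g w) = B v w) {a b : R} (hab : IsUnit (a * b - 1)) {v w : M}
    (hv : v ∈ eigenspace g a) (hw : w ∈ eigenspace g b) : B v w = 0 := by
  have h : (a * b - 1) * B v w = 0 := by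
    rw [sub_one_mul, sub_eq_zero]
    calc a * b * B v w = B (a • v) (b • w) := by simp [mul_assoc, mul_left_comm]
      _ = B v w := by rw [← mem_eigenspace_iff.mp hv, ← mem_eigenspace_iff.mp hw, hg]
  exact (hab.mul_right_eq_zero).mp h

end Eigenspace

section PairedEigenspaces

variable {K V ι : Type*} [Field K] [AddCommGroup V] [Module K V]

def pairedEigenvalues (α : ι → Kˣ) : ι ⊕ ι → K :=
  Sum.elim (fun i => (α i : K)) fun i => (α i : K)⁻¹

theorem pairedEigenvalues_swap (α : ι → Kˣ) (s : ι ⊕ ι) :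
    pairedEigenvalues α s.swap = (pairedEigenvalues α s)⁻¹ := by
  cases s <;> simp [pairedEigenvalues]

theorem pairedEigenvalues_mul_ne_one {α : ι → Kˣ} (hα : Injective (pairedEigenvalues α))
    {s t : ι ⊕ ι} (h : t ≠ s.swap) : pairedEigenvalues α s * pairedEigenvalues α t ≠ 1 :=
  fun hst => h <| hα <| by rw [pairedEigenvalues_swap, eq_inv_of_mul_eq_one_right hst]

def pairedEigenspace (g : End K V) (α : ι → Kˣ) (s : ι ⊕ ι) : Submodule K V :=
  eigenspace g (pairedEigenvalues α s)

variable {B : V →ₗ[K] V →ₗ[K] K} {g : End K V} {α : ι → Kˣ}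

theorem apply_eq_zero_of_ne_swap (hg : ∀ v w, B (g v) (g w) = B v w)
    (hα : Injective (pairedEigenvalues α)) {s t : ι ⊕ ι} (h : t ≠ s.swap)
    (x : pairedEigenspace g α s) (y : pairedEigenspace g α t) : B x y = 0 :=
  apply_eq_zero_of_mem_eigenspace hg (sub_ne_zero.mpr (pairedEigenvalues_mul_ne_one hα h)).isUnit
    x.2 y.2

variable (B g α) in
def eigenPairing (s : ι ⊕ ι) :
    pairedEigenspace g α s →ₗ[K] pairedEigenspace g α s.swap →ₗ[K] K :=
  (B.domRestrict _).compl₂ (pairedEigenspace g α s.swap).subtype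

variable [DecidableEq ι]

theorem eigenPairing_injective (hB : B.SeparatingLeft) (hg : ∀ v w, B (g v) (g w) = B v w)
    (hα : Injective (pairedEigenvalues α)) (hE : DirectSum.IsInternal (pairedEigenspace g α))
    (s : ι ⊕ ι) : Injective (eigenPairing B g α s) := by
  refine (injective_iff_map_eq_zero _).mpr fun x hx => Subtype.ext <| hB x fun w => ?_
  have hBx : B x = 0 := hE.linearMap_ext fun t y => by
    by_cases ht : t = s.swap
    · subst ht
      exact LinearMap.congr_fun hx y
    · exact apply_eq_zero_of_ne_swap hg hα ht x y
  exact LinearMap.congr_fun hBx w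

theorem isPerfPair_eigenPairing [FiniteDimensional K V] (hB : B.SeparatingLeft)
    (hsymm : ∀ v w, B v w = B w v) (hg : ∀ v w, B (g v) (g w) = B v w)
    (hα : Injective (pairedEigenvalues α)) (hE : DirectSum.IsInternal (pairedEigenspace g α))
    (i : ι) : (eigenPairing B g α (.inl i)).IsPerfPair := by
  have hflip : (eigenPairing B g α (.inl i)).flip = eigenPairing B g α (.inr i) := by
    ext x y
    exact hsymm _ _
  exact .of_injective (eigenPairing_injective hB hg hα hE _)
    (hflip ▸ eigenPairing_injective hB hg hα hE _)

variable (hp : ∀ i, (eigenPairing B g α (.inl i)).IsPerfPair)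

noncomputable def extendContragredient
    (f : ∀ i, eigenspace g (α i : K) ≃ₗ[K] eigenspace g (α i : K)) :
    ∀ s, pairedEigenspace g α s ≃ₗ[K] pairedEigenspace g α s
  | .inl i => f i
  | .inr i => haveI := hp i; (eigenPairing B g α (.inl i)).contragredient (f i)

theorem isometry_blockDiag_extendContragredient (hsymm : ∀ v w, B v w = B w v)
    (hg : ∀ v w, B (g v) (g w) = B v w) (hα : Injective (pairedEigenvalues α))
    (hE : DirectSum.IsInternal (pairedEigenspace g α))
    (f : ∀ i, eigenspace g (α i : K) ≃ₗ[K] eigenspace g (α i : K)) (v w : V) :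
    B (hE.blockDiag (extendContragredient hp f) v) (hE.blockDiag (extendContragredient hp f) w) =
      B v w := by
  set F := hE.blockDiag (extendContragredient hp f)
  suffices B.compl₁₂ (F : V →ₗ[K] V) F = B from LinearMap.congr_fun₂ this v w
  refine hE.linearMap_ext₂ hE fun s t x y => ?_
  simp only [LinearMap.compl₁₂_apply, LinearEquiv.coe_coe, F,
    DirectSum.IsInternal.blockDiag_apply]
  by_cases ht : t = s.swap
  · subst ht
    cases s with
    | inl i =>
      have := hp i
      exact (eigenPairing B g α (.inl i)).apply_contragredient (f i) x y
    | inr i =>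
      have := hp i
      rw [hsymm, hsymm x]
      exact (eigenPairing B g α (.inl i)).apply_contragredient (f i) y x
  · rw [apply_eq_zero_of_ne_swap hg hα ht, apply_eq_zero_of_ne_swap hg hα ht]

end PairedEigenspaces

section OrthogonalCentralizer

variable {K V ι : Type*} [Field K] [AddCommGroup V] [Module K V]

theorem orthogonalCentralizer_le_centralizer (B : V →ₗ[K] V →ₗ[K] K) (g : V ≃ₗ[K] V) :
    orthogonalCentralizer B g ≤ Subgroup.centralizer {g} :=
  fun _ hh => Subgroup.mem_centralizer_singleton_iff.mpr hh.2

noncomputable def orthogonalCentralizerRestrict (B : V →ₗ[K] V →ₗ[K] K) (g : V ≃ₗ[K] V)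
    (α : ι → Kˣ) :
    orthogonalCentralizer B g →* ∀ i, eigenspace (g : End K V) (α i : K) ≃ₗ[K]
      eigenspace (g : End K V) (α i : K) :=
  MonoidHom.pi fun i => (restrictEigenspace g (α i : K)).comp
    (Subgroup.inclusion (orthogonalCentralizer_le_centralizer B g))

variable [DecidableEq ι] {B : V →ₗ[K] V →ₗ[K] K} {g : V ≃ₗ[K] V} {α : ι → Kˣ}
  (hp : ∀ i, (eigenPairing B g α (.inl i)).IsPerfPair)

theorem eq_blockDiag_extendContragredient
    (hE : DirectSum.IsInternal (pairedEigenspace (g : End K V) α)) (h : orthogonalCentralizer B g) :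
    (h : V ≃ₗ[K] V) =
      hE.blockDiag (extendContragredient hp (orthogonalCentralizerRestrict B g α h)) := by
  refine hE.eq_blockDiag _ fun s x => ?_
  cases s with
  | inl i => rfl
  | inr i =>
    have := hp i
    have hres := (eigenPairing B g α (.inl i)).eq_contragredient
      (f := orthogonalCentralizerRestrict B g α h i)
      (k := restrictEigenspace g (pairedEigenvalues α (.inr i))
        (Subgroup.inclusion (orthogonalCentralizer_le_centralizer B g) h))
      fun x y => h.2.1 x y
    exact congrArg Subtype.val (LinearEquiv.congr_fun hres x)

theorem blockDiag_extendContragredient_mem (hsymm : ∀ v w, B v w = B w v)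
    (hg : ∀ v w, B (g v) (g w) = B v w) (hα : Injective (pairedEigenvalues α))
    (hE : DirectSum.IsInternal (pairedEigenspace (g : End K V) α))
    (f : ∀ i, eigenspace (g : End K V) (α i : K) ≃ₗ[K] eigenspace (g : End K V) (α i : K)) :
    hE.blockDiag (extendContragredient hp f) ∈ orthogonalCentralizer B g :=
  ⟨isometry_blockDiag_extendContragredient hp hsymm hg hα hE f,
    hE.commute_blockDiag _ (pairedEigenvalues α) fun _ _ hx => mem_eigenspace_iff.mp hx⟩

noncomputable def orthogonalCentralizerEquivPi (hsymm : ∀ v w, B v w = B w v)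
    (hg : ∀ v w, B (g v) (g w) = B v w) (hα : Injective (pairedEigenvalues α))
    (hE : DirectSum.IsInternal (pairedEigenspace (g : End K V) α)) :
    orthogonalCentralizer B g ≃* ∀ i, eigenspace (g : End K V) (α i : K) ≃ₗ[K]
      eigenspace (g : End K V) (α i : K) where
  toFun := orthogonalCentralizerRestrict B g α
  invFun f := ⟨_, blockDiag_extendContragredient_mem hp hsymm hg hα hE f⟩
  left_inv h := Subtype.ext (eq_blockDiag_extendContragredient hp hE h).symm
  right_inv f := by
    funext i
    ext x
    exact hE.blockDiag_apply (extendContragredient hp f) (i := .inl i) x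
  map_mul' := map_mul _

end OrthogonalCentralizer

/-- **The centralizer of a semisimple isometry in an orthogonal group.**

Let `(V, B)` be a finite-dimensional vector space over a field `K` with a nondegenerate
symmetric bilinear form, and let `g` be an isometry of `(V, B)`.  Suppose there are
`α₁, …, α_d ∈ Kˣ` such that the `2d` scalars `αᵢ, αᵢ⁻¹` are pairwise distinct and `V`
is the internal direct sum of the corresponding eigenspaces of `g`.  Then the centralizer
of `g` in `O(V, B)` is isomorphic, as a group, to `∏ᵢ GL(E(αᵢ))`. -/
theorem orthogonalCentralizer_iso_pi_GL
    {K V : Type*} [Field K] [AddCommGroup V] [Module K V] [FiniteDimensional K V]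
    (B : V →ₗ[K] V →ₗ[K] K)
    (hsymm : ∀ v w : V, B v w = B w v)
    (hnd : ∀ v : V, (∀ w : V, B v w = 0) → v = 0)
    (g : V ≃ₗ[K] V) (hg : ∀ v w : V, B (g v) (g w) = B v w)
    (d : ℕ) (α : Fin d → Kˣ)
    (hdist : Function.Injective
      (Sum.elim (fun i => (α i : K)) (fun i => (α i : K)⁻¹) : Fin d ⊕ Fin d → K))
    (hdecomp : DirectSum.IsInternal fun s : Fin d ⊕ Fin d =>
      Module.End.eigenspace (g : V →ₗ[K] V)
        (Sum.elim (fun i => (α i : K)) (fun i => (α i : K)⁻¹) s)) :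
    Nonempty ((orthogonalCentralizer B g) ≃*
      (∀ i : Fin d,
        (↥(Module.End.eigenspace (g : V →ₗ[K] V) (α i : K)) ≃ₗ[K]
          ↥(Module.End.eigenspace (g : V →ₗ[K] V) (α i : K))))) :=
  ⟨orthogonalCentralizerEquivPi (fun i => isPerfPair_eigenPairing hnd hsymm hg hdist hdecomp i)
    hsymm hg hdist hdecomp⟩
end
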